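/- arXiv:1703.03046 — 5 statements merged into one kernel-verified Lean document; each statement's English description precedes it below -/
import Mathlib

section
/- Let d ≥ 2 and δ ∈ (1/d, 2/d]. There exists C > 0 depending only on d and δ such that for every g ∈ L¹(ℝ^d) and all x, y ∈ ℝ^d with 0 < R := |x−y| ≤ 1/9, letting A = (x+y)/2, one has ∫_{ℝ^d ∖ B(A, |ln R|^{−δ})} |K(x−z) − K(y−z)| |g(z)| dz ≤ C ‖g‖_{L¹} R |ln R|^{dδ}. -/
/-!
Off the ball of radius `ρ = |ln R|^(-δ)` around the midpoint, both `x - z` and `y - z` have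
length at least `ρ / 2`, because `R ≤ ρ`: this is where `δ ≤ 1` and `R ≤ 1/e` enter, through
`R |ln R| < 1`. Away from the origin the map `u ↦ u / |u|^d` is Lipschitz with constant
`(d + 1) m^(-d)` on `{|u| ≥ m}`, so with `m = ρ / 2` the integrand is at most
`(d + 1) 2^d |ln R|^(dδ) R |g z|`, and integrating gives the claim with `C = (d + 1) 2^d`.
-/

open MeasureTheory Real
open scoped ENNReal NNReal Classical

/-- The Newton/Coulomb kernel `K(x) = γ x / |x|^d` (with `K(0) = 0`). -/
noncomputable def Kker (d : ℕ) (sgn : ℝ) (x : EuclideanSpace ℝ (Fin d)) :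
    EuclideanSpace ℝ (Fin d) :=
  if x = 0 then 0 else (sgn / ‖x‖ ^ d) • x

lemma inv_pow_sub_inv_pow_mul_le {a b : ℝ} (ha : 0 < a) (hab : a ≤ b) (n : ℕ) :
    ((a ^ n)⁻¹ - (b ^ n)⁻¹) * b ≤ n * (b - a) / a ^ n := by
  obtain _ | n := n
  · simp
  have hb : 0 < b := ha.trans_le hab
  have hpow : b ^ (n + 1) - a ^ (n + 1) ≤ (b - a) * (n + 1) * b ^ n := by
    simpa [abs_of_nonneg, ha.le, hb.le, hab, pow_le_pow_left₀ ha.le hab] using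
      abs_pow_sub_pow_le b a (n + 1)
  calc ((a ^ (n + 1))⁻¹ - (b ^ (n + 1))⁻¹) * b
      = (b ^ (n + 1) - a ^ (n + 1)) / (a ^ (n + 1) * b ^ n) := by
        field_simp; ring
    _ ≤ (b - a) * (n + 1) * b ^ n / (a ^ (n + 1) * b ^ n) := by gcongr
    _ = ↑(n + 1) * (b - a) / a ^ (n + 1) := by
        field_simp; push_cast; ring

section NormedSpace

variable {E : Type*} [NormedAddCommGroup E] [NormedSpace ℝ E]

lemma norm_inv_pow_smul_sub_le_of_norm_le (n : ℕ) {u v : E} (hu : u ≠ 0) (huv : ‖u‖ ≤ ‖v‖) :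
    ‖(‖u‖ ^ n)⁻¹ • u - (‖v‖ ^ n)⁻¹ • v‖ ≤ (n + 1) * ‖u - v‖ / ‖u‖ ^ n := by
  have hu0 : 0 < ‖u‖ := norm_pos_iff.mpr hu
  have hcoef : (‖v‖ ^ n)⁻¹ ≤ (‖u‖ ^ n)⁻¹ := by gcongr
  have hscalar := inv_pow_sub_inv_pow_mul_le hu0 huv n
  have hdiff : ‖v‖ - ‖u‖ ≤ ‖u - v‖ := by
    simpa [norm_sub_rev u v] using norm_sub_norm_le v u
  calc ‖(‖u‖ ^ n)⁻¹ • u - (‖v‖ ^ n)⁻¹ • v‖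
      = ‖(‖u‖ ^ n)⁻¹ • (u - v) + ((‖u‖ ^ n)⁻¹ - (‖v‖ ^ n)⁻¹) • v‖ := by
        rw [smul_sub, sub_smul]; abel_nf
    _ ≤ (‖u‖ ^ n)⁻¹ * ‖u - v‖ + ((‖u‖ ^ n)⁻¹ - (‖v‖ ^ n)⁻¹) * ‖v‖ := by
        refine (norm_add_le _ _).trans_eq ?_
        rw [norm_smul, norm_smul, Real.norm_of_nonneg (by positivity),
          Real.norm_of_nonneg (sub_nonneg.mpr hcoef)]
    _ ≤ (‖u‖ ^ n)⁻¹ * ‖u - v‖ + n * ‖u - v‖ / ‖u‖ ^ n := by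
        gcongr
        exact hscalar.trans (by gcongr)
    _ = (n + 1) * ‖u - v‖ / ‖u‖ ^ n := by ring

lemma norm_inv_pow_smul_sub_le (n : ℕ) {u v : E} {m : ℝ} (hm : 0 < m) (hmu : m ≤ ‖u‖)
    (hmv : m ≤ ‖v‖) :
    ‖(‖u‖ ^ n)⁻¹ • u - (‖v‖ ^ n)⁻¹ • v‖ ≤ (n + 1) * ‖u - v‖ / m ^ n := by
  rcases le_total ‖u‖ ‖v‖ with huv | hvu
  · refine (norm_inv_pow_smul_sub_le_of_norm_le n (norm_pos_iff.mp (hm.trans_le hmu)) huv).trans ?_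
    gcongr
  · rw [norm_sub_rev, norm_sub_rev u]
    refine (norm_inv_pow_smul_sub_le_of_norm_le n (norm_pos_iff.mp (hm.trans_le hmv)) hvu).trans ?_
    gcongr

lemma half_le_norm_sub_of_notMem_ball {x y z : E} {ρ : ℝ} (hxy : ‖x - y‖ ≤ ρ)
    (hz : z ∉ Metric.ball ((2 : ℝ)⁻¹ • (x + y)) ρ) : ρ / 2 ≤ ‖x - z‖ := by
  have hzA : ρ ≤ dist z ((2 : ℝ)⁻¹ • (x + y)) := not_lt.mp hz
  have hxA : ‖x - (2 : ℝ)⁻¹ • (x + y)‖ = ‖x - y‖ / 2 := by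
    rw [show x - (2 : ℝ)⁻¹ • (x + y) = (2 : ℝ)⁻¹ • (x - y) by module, norm_smul]
    norm_num; ring
  have := norm_sub_le_norm_sub_add_norm_sub z x ((2 : ℝ)⁻¹ • (x + y))
  rw [dist_eq_norm] at hzA
  rw [norm_sub_rev z x, hxA] at this
  linarith

end NormedSpace

lemma le_abs_log_rpow_neg {R δ : ℝ} (hR0 : 0 < R) (hR : R ≤ exp (-1)) (hδ : δ ≤ 1) :
    R ≤ |log R| ^ (-δ) := by
  have hlog : log R ≤ -1 := (log_le_iff_le_exp hR0).mpr hR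
  have hL : 1 ≤ |log R| := by rw [abs_of_neg (by linarith)]; linarith
  have hLR : |log R| * R ≤ 1 := by
    have := abs_log_mul_self_lt R hR0 (hR.trans (by simp))
    rw [abs_mul, abs_of_pos hR0] at this
    exact this.le
  have hLδ : |log R| ^ δ ≤ |log R| := by
    simpa using rpow_le_rpow_of_exponent_le hL hδ
  rw [rpow_neg (by positivity), ← one_div, le_div_iff₀ (by positivity)]
  calc R * |log R| ^ δ ≤ R * |log R| := by gcongr
    _ ≤ 1 := by linarith

lemma Kker_of_ne_zero {d : ℕ} {sgn : ℝ} {u : EuclideanSpace ℝ (Fin d)} (hu : u ≠ 0) :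
    Kker d sgn u = sgn • (‖u‖ ^ d)⁻¹ • u := by
  rw [Kker, if_neg hu, div_eq_mul_inv, mul_smul]

lemma norm_Kker_sub_le (d : ℕ) (sgn : ℝ) {u v : EuclideanSpace ℝ (Fin d)} {m : ℝ} (hm : 0 < m)
    (hmu : m ≤ ‖u‖) (hmv : m ≤ ‖v‖) :
    ‖Kker d sgn u - Kker d sgn v‖ ≤ |sgn| * ((d + 1) * ‖u - v‖ / m ^ d) := by
  rw [Kker_of_ne_zero (norm_pos_iff.mp (hm.trans_le hmu)),
    Kker_of_ne_zero (norm_pos_iff.mp (hm.trans_le hmv)), ← smul_sub, norm_smul, Real.norm_eq_abs]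
  gcongr
  exact norm_inv_pow_smul_sub_le d hm hmu hmv

lemma setLIntegral_nnnorm_mul_abs_le {α E : Type*} [MeasurableSpace α] {μ : Measure α}
    [NormedAddCommGroup E] {f : α → E} {g : α → ℝ} (hg : Integrable g μ) {s : Set α}
    (hs : MeasurableSet s) {M : ℝ} (hM : 0 ≤ M) (hf : ∀ z ∈ s, ‖f z‖ ≤ M) :
    ∫⁻ z in s, (‖f z‖₊ : ℝ≥0∞) * ENNReal.ofReal |g z| ∂μ ≤ ENNReal.ofReal (M * ∫ z, |g z| ∂μ) :=
  calc ∫⁻ z in s, (‖f z‖₊ : ℝ≥0∞) * ENNReal.ofReal |g z| ∂μ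
      ≤ ∫⁻ z in s, ENNReal.ofReal M * ENNReal.ofReal |g z| ∂μ := by
        refine setLIntegral_mono' hs fun z hz => ?_
        gcongr
        rw [← enorm_eq_nnnorm, ← ofReal_norm]
        exact ENNReal.ofReal_le_ofReal (hf z hz)
    _ ≤ ∫⁻ z, ENNReal.ofReal M * ENNReal.ofReal |g z| ∂μ := setLIntegral_le_lintegral _ _
    _ = ENNReal.ofReal (M * ∫ z, |g z| ∂μ) := by
        rw [lintegral_const_mul' _ _ ENNReal.ofReal_ne_top, ENNReal.ofReal_mul hM,
          ofReal_integral_eq_lintegral_ofReal hg.abs (ae_of_all _ fun z => abs_nonneg _)]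

theorem stmt1_general (d : ℕ) (hd : 2 ≤ d) (sgn : ℝ) (hsgn : sgn = 1 ∨ sgn = -1)
    (δ : ℝ) (hδ2 : δ ≤ 2 / (d : ℝ)) :
    ∃ C : ℝ, 0 < C ∧
      ∀ g : EuclideanSpace ℝ (Fin d) → ℝ, Integrable g →
        ∀ x y : EuclideanSpace ℝ (Fin d), x ≠ y → ‖x - y‖ ≤ 1 / 9 →
          ∫⁻ z in (Metric.ball ((2 : ℝ)⁻¹ • (x + y)) (|Real.log ‖x - y‖| ^ (-δ)))ᶜ,
              (‖Kker d sgn (x - z) - Kker d sgn (y - z)‖₊ : ℝ≥0∞) * ENNReal.ofReal |g z|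
            ≤ ENNReal.ofReal
                (C * (∫ z, |g z|) * ‖x - y‖ * |Real.log ‖x - y‖| ^ ((d : ℝ) * δ)) := by
  refine ⟨(d + 1) * 2 ^ d, by positivity, fun g hg x y hxy hR => ?_⟩
  set R := ‖x - y‖ with hR_def
  set L := |log R|
  set ρ := L ^ (-δ)
  have hR0 : 0 < R := norm_pos_iff.mpr (sub_ne_zero.mpr hxy)
  have hL0 : 0 < L := abs_pos.mpr (log_neg hR0 (by linarith)).ne
  have hRe : R ≤ exp (-1) := hR.trans <| by
    rw [exp_neg, one_div]
    exact inv_anti₀ (exp_pos 1) (by linarith [exp_one_lt_d9])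
  have hd' : (2 : ℝ) ≤ d := by exact_mod_cast hd
  have hRρ : R ≤ ρ := le_abs_log_rpow_neg hR0 hRe <| hδ2.trans ((div_le_one (by linarith)).mpr hd')
  have hρd : (ρ / 2) ^ d = (2 ^ d * L ^ ((d : ℝ) * δ))⁻¹ := by
    rw [div_pow, ← rpow_natCast ρ, ← rpow_mul hL0.le, neg_mul, mul_comm, rpow_neg hL0.le]
    field_simp
  have habs : |sgn| = 1 := by rcases hsgn with rfl | rfl <;> simp
  refine (setLIntegral_nnnorm_mul_abs_le (M := (d + 1) * 2 ^ d * R * L ^ ((d : ℝ) * δ)) hg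
    measurableSet_ball.compl (by positivity) fun z hz => ?_).trans_eq (by ring_nf)
  calc ‖Kker d sgn (x - z) - Kker d sgn (y - z)‖
      ≤ |sgn| * ((d + 1) * ‖(x - z) - (y - z)‖ / (ρ / 2) ^ d) :=
        norm_Kker_sub_le d sgn (by positivity) (half_le_norm_sub_of_notMem_ball hRρ hz)
          (half_le_norm_sub_of_notMem_ball (by rwa [norm_sub_rev]) (by rwa [add_comm]))
    _ = (d + 1) * 2 ^ d * R * L ^ ((d : ℝ) * δ) := by
        rw [habs, sub_sub_sub_cancel_right, ← hR_def, hρd]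
        field_simp

theorem stmt1 (d : ℕ) (hd : 2 ≤ d) (sgn : ℝ) (hsgn : sgn = 1 ∨ sgn = -1)
    (δ : ℝ) (hδ1 : 1 / (d : ℝ) < δ) (hδ2 : δ ≤ 2 / (d : ℝ)) :
    ∃ C : ℝ, 0 < C ∧
      ∀ g : EuclideanSpace ℝ (Fin d) → ℝ, Integrable g →
        ∀ x y : EuclideanSpace ℝ (Fin d), x ≠ y → ‖x - y‖ ≤ 1 / 9 →
          ∫⁻ z in (Metric.ball ((2 : ℝ)⁻¹ • (x + y)) (|Real.log ‖x - y‖| ^ (-δ)))ᶜ,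
              (‖Kker d sgn (x - z) - Kker d sgn (y - z)‖₊ : ℝ≥0∞) * ENNReal.ofReal |g z|
            ≤ ENNReal.ofReal
                (C * (∫ z, |g z|) * ‖x - y‖ * |Real.log ‖x - y‖| ^ ((d : ℝ) * δ)) :=
  stmt1_general d hd sgn hsgn δ hδ2
end

section
/- Let d ≥ 2, α ∈ [1,∞), β = 1 + 1/α, and δ = β/d. There exists C > 0 depending only on d and α such that for every R ∈ (0, 1/9], setting λ' = R |ln R|^β, one has ∫_{R ≤ |z| ≤ |ln R|^{−δ}} (R |z|^{−d} / λ') · (ln(R |z|^{−d} / λ'))^{1/α} dz ≤ C, where the integral is taken over z ∈ ℝ^d with R ≤ |z| ≤ |ln R|^{−δ} (on which region R|z|^{−d}/λ' ≥ 1, so the logarithm is nonnegative). -/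
/-!
With `L = |log R|`, `ρ = L ^ (-β / d)` and `Ψ s = s * (log s) ^ (1 / α)`, polar coordinates turn
the integral into `σ(S^{d-1}) * ∫_R^ρ r ^ (d - 1) * Ψ (r ^ (-d) / L ^ β) dr`. On `[R, ρ]` one has
`1 ≤ r ^ (-d) / L ^ β ≤ R ^ (-d)`, so the logarithm is at most `d * L` and, since `β - 1 / α = 1`,
the radial integrand is at most `d ^ (1 / α) / (L * r)`. As `ρ ≤ 1` and `∫_R^1 dr / r = L`, the
integral is at most `σ(S^{d-1}) * d ^ (1 / α)`.
-/

open Set MeasureTheory Measure Real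
open scoped ENNReal

section Polar

variable {E : Type*} [NormedAddCommGroup E] [NormedSpace ℝ E] [MeasurableSpace E] [BorelSpace E]
  [FiniteDimensional ℝ E] [Nontrivial E] (μ : Measure E) [μ.IsAddHaarMeasure]

lemma lintegral_fun_norm_addHaar {g : ℝ → ℝ≥0∞} (hg : Measurable g) :
    ∫⁻ x, g ‖x‖ ∂μ = μ.toSphere univ *
      ∫⁻ r in Ioi (0 : ℝ), ENNReal.ofReal (r ^ (Module.finrank ℝ E - 1)) * g r :=
  calc ∫⁻ x, g ‖x‖ ∂μ = ∫⁻ x : ({(0 : E)}ᶜ : Set E), g ‖(x : E)‖ ∂(μ.comap (↑)) := by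
        rw [lintegral_subtype_comap (measurableSet_singleton 0).compl fun x ↦ g ‖x‖,
          restrict_compl_singleton]
    _ = ∫⁻ p, g p.2 ∂(μ.toSphere.prod (volumeIoiPow (Module.finrank ℝ E - 1))) := by
        simpa using μ.measurePreserving_homeomorphUnitSphereProd.lintegral_comp_emb
          (Homeomorph.measurableEmbedding _) (g ∘ Subtype.val ∘ Prod.snd)
    _ = μ.toSphere univ * ∫⁻ r, g r ∂(volumeIoiPow (Module.finrank ℝ E - 1)) := by
        simpa using lintegral_prod_mul (μ := μ.toSphere) (f := fun _ ↦ 1)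
          aemeasurable_const (hg.comp measurable_subtype_coe).aemeasurable
    _ = _ := by
        rw [volumeIoiPow, lintegral_withDensity_eq_lintegral_mul _
          (measurable_subtype_coe.pow_const _).ennreal_ofReal
          (show Measurable fun r : Ioi (0 : ℝ) ↦ g r from hg.comp measurable_subtype_coe),
          ← lintegral_subtype_comap measurableSet_Ioi
            fun r ↦ ENNReal.ofReal (r ^ (Module.finrank ℝ E - 1)) * g r]
        rfl

lemma setLIntegral_fun_norm_Icc_addHaar {g : ℝ → ℝ≥0∞} (hg : Measurable g) {a b : ℝ}
    (ha : 0 < a) :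
    ∫⁻ x in {x : E | a ≤ ‖x‖ ∧ ‖x‖ ≤ b}, g ‖x‖ ∂μ = μ.toSphere univ *
      ∫⁻ r in Icc a b, ENNReal.ofReal (r ^ (Module.finrank ℝ E - 1)) * g r := by
  have hind : (norm ⁻¹' Icc a b).indicator (fun x : E ↦ g ‖x‖) =
      fun x ↦ (Icc a b).indicator g ‖x‖ :=
    funext fun _ ↦ indicator_comp_right _
  have hmul : (fun r ↦ ENNReal.ofReal (r ^ (Module.finrank ℝ E - 1)) * (Icc a b).indicator g r) =
      (Icc a b).indicator fun r ↦ ENNReal.ofReal (r ^ (Module.finrank ℝ E - 1)) * g r :=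
    funext fun _ ↦ (indicator_mul_right _ (fun r ↦ ENNReal.ofReal (r ^ _)) g).symm
  have hIcc : Icc a b ∩ Ioi 0 = Icc a b := inter_eq_left.mpr fun r hr ↦ ha.trans_le hr.1
  change ∫⁻ x in norm ⁻¹' Icc a b, g ‖x‖ ∂μ = _
  rw [← lintegral_indicator (measurable_norm measurableSet_Icc), hind,
    lintegral_fun_norm_addHaar μ (hg.indicator measurableSet_Icc), hmul,
    lintegral_indicator measurableSet_Icc, restrict_restrict measurableSet_Icc, hIcc]

end Polar

lemma lintegral_Icc_ofReal_inv {a b : ℝ} (ha : 0 < a) (hab : a ≤ b) :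
    ∫⁻ r in Icc a b, ENNReal.ofReal r⁻¹ = ENNReal.ofReal (log (b / a)) := by
  have hint : IntegrableOn (fun r : ℝ ↦ r⁻¹) (Icc a b) :=
    (continuousOn_inv₀.mono fun r hr ↦ (ha.trans_le hr.1).ne').integrableOn_compact isCompact_Icc
  rw [← ofReal_integral_eq_lintegral_ofReal hint, integral_Icc_eq_integral_Ioc,
    ← intervalIntegral.integral_of_le hab, integral_inv_of_pos ha (ha.trans_le hab)]
  filter_upwards [ae_restrict_mem measurableSet_Icc] with r hr
  exact inv_nonneg.mpr (ha.le.trans hr.1)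

lemma pow_mul_rpow_log_le {d : ℕ} (hd : 0 < d) {α β L R r : ℝ} (hα : 0 < α)
    (hβ : β = 1 + 1 / α) (hL : 1 ≤ L) (hR : 0 < R) (hRL : -log R ≤ L) (hRr : R ≤ r)
    (hrL : r ≤ L ^ (-(β / d))) :
    r ^ (d - 1) * (r ^ (-(d : ℝ)) / L ^ β * log (r ^ (-(d : ℝ)) / L ^ β) ^ (1 / α)) ≤
      d ^ (1 / α) / L * r⁻¹ := by
  have hr : 0 < r := hR.trans_le hRr
  have hL0 : 0 < L := one_pos.trans_le hL
  have hd0 : (0 : ℝ) < d := Nat.cast_pos.mpr hd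
  have hLβ : 1 ≤ L ^ β := one_le_rpow hL (by rw [hβ]; positivity)
  set x := r ^ (-(d : ℝ)) / L ^ β
  have hx : 1 ≤ x := by
    have h : (L ^ (-(β / d))) ^ (-(d : ℝ)) ≤ r ^ (-(d : ℝ)) :=
      rpow_le_rpow_of_nonpos hr hrL (by simp)
    rwa [← rpow_mul hL0.le, neg_mul_neg, div_mul_cancel₀ _ hd0.ne',
      ← one_le_div₀ (by positivity)] at h
  have hlog : log x ≤ d * L := calc
    log x ≤ log (r ^ (-(d : ℝ))) := log_le_log (by positivity) (div_le_self (by positivity) hLβ)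
    _ ≤ log (R ^ (-(d : ℝ))) :=
      log_le_log (by positivity) (rpow_le_rpow_of_nonpos hR hRr (by simp))
    _ = d * -log R := by rw [log_rpow hR]; ring
    _ ≤ d * L := by gcongr
  have hlogpow : log x ^ (1 / α) ≤ d ^ (1 / α) * L ^ (1 / α) := by
    rw [← mul_rpow hd0.le hL0.le]
    exact rpow_le_rpow (log_nonneg hx) hlog (by positivity)
  calc r ^ (d - 1) * (x * log x ^ (1 / α))
      ≤ r ^ (d - 1) * (x * (d ^ (1 / α) * L ^ (1 / α))) := by gcongr
    _ = d ^ (1 / α) / L * r⁻¹ := by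
      have hrd : r ^ d = r ^ (d - 1) * r := (pow_sub_one_mul hd.ne' r).symm
      simp only [x, hβ, rpow_add hL0, rpow_one, rpow_neg hr.le, rpow_natCast, hrd]
      field_simp

lemma one_le_abs_log_of_le_one_div_nine {R : ℝ} (hR : 0 < R) (hR9 : R ≤ 1 / 9) :
    1 ≤ |log R| := by
  rw [abs_of_neg (log_neg hR (by linarith)), le_neg, log_le_iff_le_exp hR, exp_neg]
  exact hR9.trans (by rw [one_div]; exact inv_anti₀ (exp_pos 1) (by linarith [exp_one_lt_d9]))

theorem stmt3 (d : ℕ) (hd : 2 ≤ d) (α : ℝ) (hα : 1 ≤ α)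
    (β δ : ℝ) (hβ : β = 1 + 1 / α) (hδ : δ = β / d) :
    ∃ C : ℝ, 0 < C ∧
      ∀ R : ℝ, 0 < R → R ≤ 1 / 9 →
        ∫⁻ z in {z : EuclideanSpace ℝ (Fin d) | R ≤ ‖z‖ ∧ ‖z‖ ≤ |Real.log R| ^ (-δ)},
            ENNReal.ofReal
              ((R * ‖z‖ ^ (-(d : ℝ)) / (R * |Real.log R| ^ β)) *
                Real.log (R * ‖z‖ ^ (-(d : ℝ)) / (R * |Real.log R| ^ β)) ^ (1 / α))
          ≤ ENNReal.ofReal C := by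
  subst hδ
  have hα0 : 0 < α := zero_lt_one.trans_le hα
  have : Nonempty (Fin d) := ⟨⟨0, by omega⟩⟩
  set σ := (volume : Measure (EuclideanSpace ℝ (Fin d))).toSphere univ
  have hσ : σ ≠ ⊤ := measure_ne_top _ _
  refine ⟨σ.toReal * d ^ (1 / α) + 1, by positivity, fun R hR hR9 ↦ ?_⟩
  set L := |log R|
  have hLR : L = -log R := abs_of_neg (log_neg hR (by linarith))
  have hL : 1 ≤ L := one_le_abs_log_of_le_one_div_nine hR hR9
  have hρ : L ^ (-(β / d)) ≤ 1 := rpow_le_one_of_one_le_of_nonpos hL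
    (neg_nonpos.mpr (by rw [hβ]; positivity))
  have hmeas : Measurable fun r : ℝ ↦ ENNReal.ofReal (R * r ^ (-(d : ℝ)) / (R * L ^ β) *
      log (R * r ^ (-(d : ℝ)) / (R * L ^ β)) ^ (1 / α)) := by fun_prop
  calc _ = σ * ∫⁻ r in Icc R (L ^ (-(β / d))), ENNReal.ofReal (r ^ (d - 1)) *
        ENNReal.ofReal (R * r ^ (-(d : ℝ)) / (R * L ^ β) *
          log (R * r ^ (-(d : ℝ)) / (R * L ^ β)) ^ (1 / α)) := by
        rw [setLIntegral_fun_norm_Icc_addHaar _ hmeas hR, finrank_euclideanSpace_fin]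
    _ ≤ σ * ∫⁻ r in Icc R 1, ENNReal.ofReal (d ^ (1 / α) / L) * ENNReal.ofReal r⁻¹ := by
        gcongr σ * ?_
        refine (setLIntegral_mono' measurableSet_Icc fun r hr ↦ ?_).trans
          (lintegral_mono_set (Icc_subset_Icc_right hρ))
        rw [← ENNReal.ofReal_mul (pow_nonneg (hR.le.trans hr.1) _),
          ← ENNReal.ofReal_mul (by positivity), mul_div_mul_left _ _ hR.ne']
        exact ENNReal.ofReal_le_ofReal
          (pow_mul_rpow_log_le (by omega) hα0 hβ hL hR hLR.ge hr.1 hr.2)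
    _ = σ * ENNReal.ofReal (d ^ (1 / α)) := by
        rw [lintegral_const_mul' _ _ ENNReal.ofReal_ne_top,
          lintegral_Icc_ofReal_inv hR (by linarith), ← ENNReal.ofReal_mul (by positivity),
          one_div R, log_inv, ← hLR, div_mul_cancel₀ _ (by positivity)]
    _ ≤ ENNReal.ofReal (σ.toReal * d ^ (1 / α) + 1) := by
        rw [← ENNReal.ofReal_toReal hσ, ← ENNReal.ofReal_mul ENNReal.toReal_nonneg,
          ENNReal.toReal_ofReal ENNReal.toReal_nonneg]
        exact ENNReal.ofReal_le_ofReal (le_add_of_nonneg_right zero_le_one)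
end

section
/- Let C > 0, β ∈ (1,2), and set γ = 2/(2−β) (equivalently, if β = 1 + 1/α with α > 1, then γ = 2/(1 − 1/α)). Let F : [0,T] → (0, 1/9] be differentiable with F'(t) ≤ C F(t) (ln(1/F(t)))^{β/2} for all t ∈ [0,T]. Then for every t ∈ [0,T] such that (ln(1/F(0)))^{1/γ} − (C/γ) t ≥ (ln 9)^{1/γ}, one has F(t) ≤ exp(−((ln(1/F(0)))^{1/γ} − (C/γ) t)^γ). -/
open MeasureTheory Real

theorem stmt6 (C T β : ℝ) (hC : 0 < C) (hT : 0 ≤ T) (hβ1 : 1 < β) (hβ2 : β < 2)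
    (γ : ℝ) (hγ : γ = 2 / (2 - β))
    (F F' : ℝ → ℝ)
    (hF : ∀ t ∈ Set.Icc (0 : ℝ) T, HasDerivAt F (F' t) t)
    (hFpos : ∀ t ∈ Set.Icc (0 : ℝ) T, 0 < F t)
    (hFle : ∀ t ∈ Set.Icc (0 : ℝ) T, F t ≤ 1 / 9)
    (hF' : ∀ t ∈ Set.Icc (0 : ℝ) T,
      F' t ≤ C * F t * Real.log (1 / F t) ^ (β / 2)) :
    ∀ t ∈ Set.Icc (0 : ℝ) T,
      Real.log 9 ^ (1 / γ) ≤ Real.log (1 / F 0) ^ (1 / γ) - (C / γ) * t →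
      F t ≤ Real.exp (-(Real.log (1 / F 0) ^ (1 / γ) - (C / γ) * t) ^ γ) := by
  have h2β : 0 < 2 - β := by linarith
  have hγpos : 0 < γ := by rw [hγ]; positivity
  have hγne : γ ≠ 0 := ne_of_gt hγpos
  have hinv : 1 / γ = 1 - β / 2 := by
    rw [hγ]; field_simp
  have hlog9 : 0 < Real.log 9 := Real.log_pos (by norm_num)
  set u : ℝ → ℝ := fun s => -Real.log (F s) with hu_def
  have hulog : ∀ s ∈ Set.Icc (0 : ℝ) T, Real.log (1 / F s) = u s := by
    intro s hs
    simp [hu_def, one_div, Real.log_inv]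
  have hu_lb : ∀ s ∈ Set.Icc (0 : ℝ) T, Real.log 9 ≤ u s := by
    intro s hs
    have h1 : Real.log (F s) ≤ Real.log (1 / 9) :=
      Real.log_le_log (hFpos s hs) (hFle s hs)
    have h2 : Real.log (1 / 9 : ℝ) = -Real.log 9 := by
      rw [one_div, Real.log_inv]
    simp only [hu_def]; linarith
  have hu_pos : ∀ s ∈ Set.Icc (0 : ℝ) T, 0 < u s := fun s hs =>
    lt_of_lt_of_le hlog9 (hu_lb s hs)
  have hu' : ∀ s ∈ Set.Icc (0 : ℝ) T, HasDerivAt u (-(F' s / F s)) s := fun s hs =>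
    ((hF s hs).log (ne_of_gt (hFpos s hs))).neg
  set H : ℝ → ℝ := fun s => u s ^ (1 / γ) with hH_def
  have hH' : ∀ s ∈ Set.Icc (0 : ℝ) T,
      HasDerivAt H (-(F' s / F s) * (1 / γ) * u s ^ (1 / γ - 1)) s := by
    intro s hs
    exact (hu' s hs).rpow_const (p := 1 / γ) (Or.inl (ne_of_gt (hu_pos s hs)))
  set G : ℝ → ℝ := fun s => H s + (C / γ) * s with hG_def
  have hG' : ∀ s ∈ Set.Icc (0 : ℝ) T,
      HasDerivAt G (-(F' s / F s) * (1 / γ) * u s ^ (1 / γ - 1) + C / γ) s := by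
    intro s hs
    have h2 : HasDerivAt (fun x : ℝ => (C / γ) * x) (C / γ) s := by
      simpa using (hasDerivAt_id s).const_mul (C / γ)
    exact (hH' s hs).add h2
  have hG'nonneg : ∀ s ∈ Set.Icc (0 : ℝ) T,
      0 ≤ -(F' s / F s) * (1 / γ) * u s ^ (1 / γ - 1) + C / γ := by
    intro s hs
    have hups := hu_pos s hs
    have hFp := hFpos s hs
    have hrp : (0:ℝ) < u s ^ (1 / γ - 1) := Real.rpow_pos_of_pos hups _
    -- F' s / F s ≤ C * u s ^ (β/2)
    have hdiv : F' s / F s ≤ C * u s ^ (β / 2) := by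
      rw [div_le_iff₀ hFp]
      calc F' s ≤ C * F s * Real.log (1 / F s) ^ (β / 2) := hF' s hs
        _ = C * u s ^ (β / 2) * F s := by rw [hulog s hs]; ring
    have hmul : F' s / F s * u s ^ (1 / γ - 1) ≤
        C * u s ^ (β / 2) * u s ^ (1 / γ - 1) :=
      mul_le_mul_of_nonneg_right hdiv (le_of_lt hrp)
    have hcomb : u s ^ (β / 2) * u s ^ (1 / γ - 1) = 1 := by
      rw [← Real.rpow_add hups]
      have : β / 2 + (1 / γ - 1) = 0 := by rw [hinv]; ring
      rw [this, Real.rpow_zero]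
    have : F' s / F s * u s ^ (1 / γ - 1) ≤ C := by
      calc F' s / F s * u s ^ (1 / γ - 1) ≤ C * (u s ^ (β / 2) * u s ^ (1 / γ - 1)) := by
            linarith [hmul]
        _ = C := by rw [hcomb, mul_one]
    have h1γ : (0:ℝ) < 1 / γ := by positivity
    have hgoal : -(F' s / F s) * (1 / γ) * u s ^ (1 / γ - 1) + C / γ
        = (1 / γ) * (C - F' s / F s * u s ^ (1 / γ - 1)) := by field_simp; ring
    rw [hgoal]
    exact mul_nonneg (le_of_lt h1γ) (by linarith)
  have hmono : MonotoneOn G (Set.Icc 0 T) := by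
    apply monotoneOn_of_deriv_nonneg (convex_Icc 0 T)
    · intro s hs; exact (hG' s hs).continuousAt.continuousWithinAt
    · intro s hs
      have hs' : s ∈ Set.Icc (0:ℝ) T := interior_subset hs
      exact (hG' s hs').differentiableAt.differentiableWithinAt
    · intro s hs
      have hs' : s ∈ Set.Icc (0:ℝ) T := interior_subset hs
      rw [(hG' s hs').deriv]
      exact hG'nonneg s hs'
  intro t ht hyp
  have h0mem : (0:ℝ) ∈ Set.Icc (0:ℝ) T := Set.mem_Icc.mpr ⟨le_refl 0, hT⟩
  have hGle : G 0 ≤ G t := hmono h0mem ht ht.1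
  have hH0 : Real.log (1 / F 0) ^ (1 / γ) = H 0 := by
    rw [hulog 0 h0mem]
  rw [hH0] at hyp ⊢
  have hkey : H 0 - (C / γ) * t ≤ H t := by
    simp only [hG_def] at hGle
    simp only [mul_zero, add_zero] at hGle
    linarith
  have hbase_nonneg : 0 ≤ H 0 - (C / γ) * t :=
    le_trans (Real.rpow_nonneg (le_of_lt hlog9) _) hyp
  have hpow : (H 0 - (C / γ) * t) ^ γ ≤ (H t) ^ γ :=
    Real.rpow_le_rpow hbase_nonneg hkey (le_of_lt hγpos)
  have hHt : (H t) ^ γ = u t := by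
    simp only [hH_def]
    rw [← Real.rpow_mul (le_of_lt (hu_pos t ht)), one_div_mul_cancel hγne, Real.rpow_one]
  rw [hHt] at hpow
  rw [← Real.exp_log (hFpos t ht)]
  apply Real.exp_le_exp.mpr
  have : Real.log (F t) = -u t := by simp [hu_def]
  rw [this]
  linarith
end

section
/- Let d ≥ 1, α ∈ [1,∞), c > 0 and B > 0. There exist constants C > 0 and λ > 0 depending only on d, α, c and B such that for every measurable function f : ℝ^d × ℝ^d → [0, B] with ∫∫_{ℝ^d×ℝ^d} f(x,v) e^{c⟨v⟩^{dα}} dx dv < ∞, the spatial density ρ(x) = ∫_{ℝ^d} f(x,v) dv satisfies ∫_{ℝ^d} (exp(ρ(x)^α/λ) − 1) dx ≤ C ∫∫_{ℝ^d×ℝ^d} f(x,v) e^{c⟨v⟩^{dα}} dx dv. -/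
open MeasureTheory Real

lemma aux_expm1 (s : ℝ) : Real.exp s - 1 ≤ s * Real.exp s := by
  have h := Real.add_one_le_exp (-s)
  rw [Real.exp_neg, inv_eq_one_div, le_div_iff₀ (Real.exp_pos s)] at h
  nlinarith [Real.exp_pos s]

lemma aux_add_rpow (x y a : ℝ) (hx : 0 ≤ x) (hy : 0 ≤ y) (ha : 0 ≤ a) :
    (x + y) ^ a ≤ 2 ^ a * (x ^ a + y ^ a) := by
  have h1 : x + y ≤ 2 * max x y := by
    have := le_max_left x y; have := le_max_right x y; linarith
  have h2 : (x + y) ^ a ≤ (2 * max x y) ^ a :=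
    Real.rpow_le_rpow (by linarith) h1 ha
  rw [Real.mul_rpow (by norm_num) (le_max_of_le_left hx)] at h2
  refine h2.trans ?_
  gcongr
  rcases le_total x y with h | h
  · rw [max_eq_right h]
    nlinarith [Real.rpow_nonneg hx a]
  · rw [max_eq_left h]
    nlinarith [Real.rpow_nonneg hy a]

lemma aux_key (α c K : ℝ) (hα : 1 ≤ α) (hc : 0 < c) (hK : 0 < K) :
    ∃ C : ℝ, 0 < C ∧ ∃ lam : ℝ, 0 < lam ∧ ∀ ρ m : ℝ, 0 ≤ ρ → ρ ≤ m →
      (∀ t : ℝ, 0 ≤ t → ρ ≤ K * t ^ (1/α) + Real.exp (-(c*t)) * m) →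
      Real.exp (ρ ^ α / lam) - 1 ≤ C * m := by
  have hα0 : 0 < α := lt_of_lt_of_le one_pos hα
  have hKα : 0 < K ^ α := Real.rpow_pos_of_pos hK α
  have h2α : 0 < (2:ℝ) ^ α := Real.rpow_pos_of_pos two_pos α
  set lam : ℝ := 2 * 2 ^ α * K ^ α / c with hlamdef
  have hlam : 0 < lam := by positivity
  set a : ℝ := c / (2 * K ^ α) with hadef
  refine ⟨max (Real.exp a) (Real.exp (1/lam) / lam), by positivity, lam, hlam, ?_⟩
  intro ρ m h0 hρm hbound
  have hm : 0 ≤ m := le_trans h0 hρm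
  rcases le_or_gt m 1 with hm1 | hm1
  · -- small case
    have hρ1 : ρ ≤ 1 := hρm.trans hm1
    have h1 : ρ ^ α ≤ ρ := by
      rcases eq_or_lt_of_le h0 with h | h
      · rw [← h, Real.zero_rpow hα0.ne']
      · calc ρ ^ α ≤ ρ ^ (1:ℝ) := Real.rpow_le_rpow_of_exponent_ge h hρ1 hα
          _ = ρ := Real.rpow_one ρ
    have hρα : 0 ≤ ρ ^ α := Real.rpow_nonneg h0 α
    have h2 : ρ ^ α / lam ≤ 1 / lam := by
      gcongr
      linarith
    calc Real.exp (ρ ^ α / lam) - 1 ≤ (ρ ^ α / lam) * Real.exp (ρ ^ α / lam) :=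
          aux_expm1 _
      _ ≤ (ρ / lam) * Real.exp (1/lam) := by
          apply mul_le_mul (by gcongr) (Real.exp_le_exp.mpr h2) (Real.exp_pos _).le
          positivity
      _ = ρ * (Real.exp (1/lam) / lam) := by ring
      _ ≤ m * max (Real.exp a) (Real.exp (1/lam) / lam) := by
          apply mul_le_mul hρm (le_max_right _ _) (by positivity) hm
      _ = _ := by ring
  · -- large case
    have hm0 : 0 < m := lt_trans one_pos hm1
    have hlog : 0 ≤ Real.log m := Real.log_nonneg hm1.le
    have h1 := hbound (Real.log m / c) (by positivity)
    have h2 : Real.exp (-(c * (Real.log m / c))) * m = 1 := by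
      rw [mul_div_cancel₀ _ hc.ne', Real.exp_neg, Real.exp_log hm0]
      exact inv_mul_cancel₀ hm0.ne'
    rw [h2] at h1
    have ht0 : (0:ℝ) ≤ Real.log m / c := by positivity
    have hKt : 0 ≤ K * (Real.log m / c) ^ (1/α) := by positivity
    have h3 : ρ ^ α ≤ 2 ^ α * (K ^ α * (Real.log m / c) + 1) := by
      calc ρ ^ α ≤ (K * (Real.log m / c) ^ (1/α) + 1) ^ α :=
            Real.rpow_le_rpow h0 h1 hα0.le
        _ ≤ 2 ^ α * ((K * (Real.log m / c) ^ (1/α)) ^ α + 1 ^ α) :=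
            aux_add_rpow _ _ _ hKt zero_le_one hα0.le
        _ = 2 ^ α * (K ^ α * (Real.log m / c) + 1) := by
            rw [Real.mul_rpow hK.le (Real.rpow_nonneg ht0 _), Real.one_rpow,
              ← Real.rpow_mul ht0, one_div_mul_cancel hα0.ne', Real.rpow_one]
    have h4 : ρ ^ α / lam ≤ Real.log m / 2 + a := by
      rw [div_le_iff₀ hlam]
      have : (Real.log m / 2 + a) * lam = 2 ^ α * (K ^ α * (Real.log m / c) + 1) := by
        rw [hlamdef, hadef]; field_simp
      rw [this]; exact h3
    have h5 : Real.exp (ρ ^ α / lam) ≤ m * Real.exp a := by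
      calc Real.exp (ρ ^ α / lam) ≤ Real.exp (Real.log m + a) := by
            apply Real.exp_le_exp.mpr; linarith
        _ = m * Real.exp a := by rw [Real.exp_add, Real.exp_log hm0]
    calc Real.exp (ρ ^ α / lam) - 1 ≤ m * Real.exp a := by linarith
      _ ≤ m * max (Real.exp a) (Real.exp (1/lam) / lam) := by
          apply mul_le_mul_of_nonneg_left (le_max_left _ _) hm
      _ = _ := by ring
open MeasureTheory Real
open scoped ENNReal

theorem stmt9 (d : ℕ) (hd : 1 ≤ d) (α c B : ℝ) (hα : 1 ≤ α) (hc : 0 < c) (hB : 0 < B) :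
    ∃ C : ℝ, 0 < C ∧ ∃ lam : ℝ, 0 < lam ∧
      ∀ f : EuclideanSpace ℝ (Fin d) × EuclideanSpace ℝ (Fin d) → ℝ,
        Measurable f → (∀ p, 0 ≤ f p) → (∀ p, f p ≤ B) →
        (∫⁻ p, ENNReal.ofReal
            (f p * Real.exp (c * Real.sqrt (1 + ‖p.2‖ ^ 2) ^ ((d : ℝ) * α))) ≠ ⊤) →
        ∫⁻ x, ENNReal.ofReal (Real.exp ((∫ v, f (x, v)) ^ α / lam) - 1)
          ≤ ENNReal.ofReal C *
            ∫⁻ p, ENNReal.ofReal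
              (f p * Real.exp (c * Real.sqrt (1 + ‖p.2‖ ^ 2) ^ ((d : ℝ) * α))) := by
  have hd0 : (0:ℝ) < d := by exact_mod_cast hd
  have hα0 : 0 < α := lt_of_lt_of_le one_pos hα
  have hdα : 0 < (d:ℝ) * α := by positivity
  set E := EuclideanSpace ℝ (Fin d) with hE
  haveI : Nonempty (Fin d) := ⟨⟨0, hd⟩⟩
  haveI : Nontrivial E := inferInstance
  set κ : ℝ := (volume (Metric.ball (0:E) 1)).toReal with hκdef
  have hκfin : volume (Metric.ball (0:E) 1) ≠ ⊤ := measure_ball_lt_top.ne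
  have hκpos : 0 < κ :=
    ENNReal.toReal_pos (Metric.measure_ball_pos volume 0 one_pos).ne' hκfin
  obtain ⟨C, hC, lam, hlam, hkey⟩ := aux_key α c (B * κ) hα hc (by positivity)
  refine ⟨C, hC, lam, hlam, ?_⟩
  intro f hfm hf0 hfB hfin
  set g : E × E → ℝ :=
    fun p => f p * Real.exp (c * Real.sqrt (1 + ‖p.2‖ ^ 2) ^ ((d : ℝ) * α)) with hgdef
  have hgm : Measurable g := by
    apply hfm.mul
    apply Real.measurable_exp.comp
    apply measurable_const.mul
    exact (((continuous_const.add
      ((continuous_norm.comp continuous_snd).pow 2)).sqrt.rpow_const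
      (fun p => Or.inr hdα.le)).measurable)
  set G : E × E → ℝ≥0∞ := fun p => ENNReal.ofReal (g p) with hGdef
  have hGm : Measurable G := ENNReal.measurable_ofReal.comp hgm
  set M : E → ℝ≥0∞ := fun x => ∫⁻ v, G (x, v) with hMdef
  have hMm : Measurable M :=
    Measurable.lintegral_prod_right (f := fun x v => G (x, v)) hGm
  have hfin' : ∫⁻ p, G p ≠ ⊤ := hfin
  have htonelli : ∫⁻ x, M x = ∫⁻ p, G p := by
    rw [Measure.volume_eq_prod, lintegral_prod G hGm.aemeasurable]
  have hMfin : ∀ᵐ x : E, M x ≠ ⊤ := by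
    filter_upwards [ae_lt_top hMm (htonelli ▸ hfin')] with x hx using hx.ne
  have hpt : ∀ᵐ x : E, ENNReal.ofReal (Real.exp ((∫ v, f (x, v)) ^ α / lam) - 1)
      ≤ ENNReal.ofReal C * M x := by
    filter_upwards [hMfin] with x hx
    set m : ℝ := (M x).toReal with hmdef
    have hMx : ENNReal.ofReal m = M x := ENNReal.ofReal_toReal hx
    set ρ : ℝ := ∫ v, f (x, v) with hρdef
    have hfx : Measurable fun v => f (x, v) := hfm.comp measurable_prodMk_left
    have hρ_eq : ρ = (∫⁻ v, ENNReal.ofReal (f (x, v))).toReal :=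
      integral_eq_lintegral_of_nonneg_ae (Filter.Eventually.of_forall fun v => hf0 _)
        hfx.aestronglyMeasurable
    have hfleg : ∀ p, f p ≤ g p := by
      intro p
      have h1 : (0:ℝ) ≤ c * Real.sqrt (1 + ‖p.2‖ ^ 2) ^ ((d:ℝ) * α) := by positivity
      have h2 := Real.one_le_exp h1
      have := hf0 p
      simp only [hgdef]
      nlinarith
    have hlint_le : ∫⁻ v, ENNReal.ofReal (f (x, v)) ≤ M x :=
      lintegral_mono fun v => ENNReal.ofReal_le_ofReal (hfleg _)
    have hρ0 : 0 ≤ ρ := by rw [hρ_eq]; exact ENNReal.toReal_nonneg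
    have hρm : ρ ≤ m := by rw [hρ_eq, hmdef]; exact ENNReal.toReal_mono hx hlint_le
    have hm0 : 0 ≤ m := ENNReal.toReal_nonneg
    have hbound : ∀ t : ℝ, 0 ≤ t →
        ρ ≤ (B * κ) * t ^ (1/α) + Real.exp (-(c*t)) * m := by
      intro t ht
      set R : ℝ := t ^ (1/((d:ℝ)*α)) with hRdef
      have hR0 : 0 ≤ R := Real.rpow_nonneg ht _
      have hRt : R ^ ((d:ℝ)*α) = t := by
        rw [hRdef, ← Real.rpow_mul ht, one_div_mul_cancel hdα.ne', Real.rpow_one]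
      have hRd : R ^ (d : ℕ) = t ^ (1/α) := by
        rw [← Real.rpow_natCast R d, hRdef, ← Real.rpow_mul ht]
        congr 1
        field_simp
      have hsplit := lintegral_add_compl (μ := volume)
        (fun v => ENNReal.ofReal (f (x, v))) (measurableSet_ball (x := (0:E)) (ε := R))
      have hb1 : ∫⁻ v in Metric.ball (0:E) R, ENNReal.ofReal (f (x, v))
          ≤ ENNReal.ofReal B * (ENNReal.ofReal (R ^ (d:ℕ)) * volume (Metric.ball (0:E) 1)) := by
        calc ∫⁻ v in Metric.ball (0:E) R, ENNReal.ofReal (f (x, v))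
            ≤ ∫⁻ _v in Metric.ball (0:E) R, ENNReal.ofReal B :=
              setLIntegral_mono measurable_const fun v _ => ENNReal.ofReal_le_ofReal (hfB _)
          _ = ENNReal.ofReal B * volume (Metric.ball (0:E) R) := setLIntegral_const _ _
          _ = _ := by
              rw [Measure.addHaar_ball volume (0:E) hR0]
              congr 2
              rw [finrank_euclideanSpace_fin]
      have hb2 : ∫⁻ v in (Metric.ball (0:E) R)ᶜ, ENNReal.ofReal (f (x, v))
          ≤ ENNReal.ofReal (Real.exp (-(c*t))) * M x := by
        have hmeas2 : Measurable fun v : E => ENNReal.ofReal (Real.exp (-(c*t)) * g (x, v)) :=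
          ENNReal.measurable_ofReal.comp
            (measurable_const.mul (hgm.comp measurable_prodMk_left))
        calc ∫⁻ v in (Metric.ball (0:E) R)ᶜ, ENNReal.ofReal (f (x, v))
            ≤ ∫⁻ v in (Metric.ball (0:E) R)ᶜ,
                ENNReal.ofReal (Real.exp (-(c*t)) * g (x, v)) := by
              apply setLIntegral_mono hmeas2
              intro v hv
              apply ENNReal.ofReal_le_ofReal
              have hvR : R ≤ ‖v‖ := by
                have h1 : ¬ dist v 0 < R := fun h => hv (Metric.mem_ball.mpr h)
                rw [dist_zero_right] at h1
                linarith [not_lt.mp h1]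
              have hτ : t ≤ Real.sqrt (1 + ‖v‖ ^ 2) ^ ((d:ℝ) * α) := by
                rw [← hRt]
                apply Real.rpow_le_rpow hR0 ?_ hdα.le
                calc R ≤ ‖v‖ := hvR
                  _ = Real.sqrt (‖v‖ ^ 2) := (Real.sqrt_sq (norm_nonneg v)).symm
                  _ ≤ Real.sqrt (1 + ‖v‖ ^ 2) := Real.sqrt_le_sqrt (by nlinarith)
              have h1 : (1:ℝ) ≤ Real.exp (-(c*t)) *
                  Real.exp (c * Real.sqrt (1 + ‖v‖ ^ 2) ^ ((d:ℝ) * α)) := by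
                rw [← Real.exp_add]
                apply Real.one_le_exp
                nlinarith
              calc f (x, v) = f (x, v) * 1 := (mul_one _).symm
                _ ≤ f (x, v) * (Real.exp (-(c*t)) *
                    Real.exp (c * Real.sqrt (1 + ‖v‖ ^ 2) ^ ((d:ℝ) * α))) :=
                  mul_le_mul_of_nonneg_left h1 (hf0 _)
                _ = Real.exp (-(c*t)) * g (x, v) := by simp only [hgdef]; ring
          _ ≤ ∫⁻ v, ENNReal.ofReal (Real.exp (-(c*t)) * g (x, v)) :=
              setLIntegral_le_lintegral _ _
          _ = ∫⁻ v, ENNReal.ofReal (Real.exp (-(c*t))) * G (x, v) := by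
              apply lintegral_congr
              intro v
              rw [hGdef, ENNReal.ofReal_mul (Real.exp_pos _).le]
          _ = ENNReal.ofReal (Real.exp (-(c*t))) * M x :=
              lintegral_const_mul _ (hGm.comp measurable_prodMk_left)
      have hcomb : ∫⁻ v, ENNReal.ofReal (f (x, v))
          ≤ ENNReal.ofReal ((B * κ) * t ^ (1/α) + Real.exp (-(c*t)) * m) := by
        rw [← hsplit]
        have hvol : volume (Metric.ball (0:E) 1) = ENNReal.ofReal κ :=
          (ENNReal.ofReal_toReal hκfin).symm
        have : ENNReal.ofReal ((B * κ) * t ^ (1/α) + Real.exp (-(c*t)) * m)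
            = ENNReal.ofReal B * (ENNReal.ofReal (R ^ (d:ℕ)) * volume (Metric.ball (0:E) 1))
              + ENNReal.ofReal (Real.exp (-(c*t))) * M x := by
          rw [hvol, ← hMx, ← ENNReal.ofReal_mul (by positivity : (0:ℝ) ≤ R ^ (d:ℕ)),
            ← ENNReal.ofReal_mul hB.le, ← ENNReal.ofReal_mul (Real.exp_pos _).le,
            ← ENNReal.ofReal_add (by positivity) (mul_nonneg (Real.exp_pos _).le hm0)]
          congr 1
          rw [hRd]
          ring
        rw [this]
        exact add_le_add hb1 hb2
      calc ρ = (∫⁻ v, ENNReal.ofReal (f (x, v))).toReal := hρ_eq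
        _ ≤ (ENNReal.ofReal ((B * κ) * t ^ (1/α) + Real.exp (-(c*t)) * m)).toReal :=
            ENNReal.toReal_mono ENNReal.ofReal_ne_top hcomb
        _ = (B * κ) * t ^ (1/α) + Real.exp (-(c*t)) * m :=
            ENNReal.toReal_ofReal
              (add_nonneg (by positivity) (mul_nonneg (Real.exp_pos _).le hm0))
    have hfinal := hkey ρ m hρ0 hρm hbound
    calc ENNReal.ofReal (Real.exp (ρ ^ α / lam) - 1)
        ≤ ENNReal.ofReal (C * m) := ENNReal.ofReal_le_ofReal hfinal
      _ = ENNReal.ofReal C * ENNReal.ofReal m := ENNReal.ofReal_mul hC.le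
      _ = ENNReal.ofReal C * M x := by rw [hMx]
  calc ∫⁻ x, ENNReal.ofReal (Real.exp ((∫ v, f (x, v)) ^ α / lam) - 1)
      ≤ ∫⁻ x, ENNReal.ofReal C * M x := lintegral_mono_ae hpt
    _ = ENNReal.ofReal C * ∫⁻ x, M x := lintegral_const_mul _ hMm
    _ = _ := by rw [htonelli]
end

section
/- Let d ≥ 1, α ∈ [1,∞), c > 0 and B > 0. There exists a constant C > 0 depending only on d, α, c and B such that for every measurable function f : ℝ^d → [0, B] with M := ∫_{ℝ^d} f(v) e^{c⟨v⟩^{dα}} dv < ∞, one has ∫_{ℝ^d} f(v) dv ≤ 1 + C (ln(max(M, 1)))^{1/α}. -/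
/-!
Split `ℝ^d` into the ball of radius `R` and its complement. On the ball, `f ≤ B` gives a
contribution `B |B_1| R^d`; off the ball the weight is at least `e^{c R^{dα}}`, so a Chernoff
(Markov) bound gives `e^{-c R^{dα}} M`. Choosing `c R^{dα} = ln (max M 1)` makes the second term
at most `1` and the first one a constant times `(ln (max M 1))^{1/α}`.
-/

open MeasureTheory Real Metric
open scoped ENNReal

lemma setLIntegral_ofReal_le_exp_neg_mul_lintegral {X : Type*} [MeasurableSpace X]
    (μ : Measure X) {f φ : X → ℝ} {s : Set X} {t : ℝ} (hs : MeasurableSet s)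
    (hf : ∀ x, 0 ≤ f x) (hφ : ∀ x ∈ s, t ≤ φ x) :
    ∫⁻ x in s, ENNReal.ofReal (f x) ∂μ
      ≤ ENNReal.ofReal (exp (-t)) * ∫⁻ x, ENNReal.ofReal (f x * exp (φ x)) ∂μ := by
  calc ∫⁻ x in s, ENNReal.ofReal (f x) ∂μ
      ≤ ∫⁻ x in s, ENNReal.ofReal (exp (-t)) * ENNReal.ofReal (f x * exp (φ x)) ∂μ := by
        refine setLIntegral_mono' hs fun x hx => ?_
        rw [← ENNReal.ofReal_mul (exp_pos _).le]
        refine ENNReal.ofReal_le_ofReal ?_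
        calc f x ≤ f x * exp (φ x - t) :=
              le_mul_of_one_le_right (hf x) (one_le_exp (sub_nonneg.2 (hφ x hx)))
          _ = exp (-t) * (f x * exp (φ x)) := by rw [sub_eq_add_neg, exp_add]; ring
    _ ≤ ∫⁻ x, ENNReal.ofReal (exp (-t)) * ENNReal.ofReal (f x * exp (φ x)) ∂μ :=
        setLIntegral_le_lintegral _ _
    _ = _ := lintegral_const_mul' _ _ ENNReal.ofReal_ne_top

lemma lintegral_ofReal_le_ball_add_exp_moment {X : Type*} [PseudoMetricSpace X]
    [MeasurableSpace X] [OpensMeasurableSpace X] (μ : Measure X) {f φ : X → ℝ} (x₀ : X)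
    {R B t : ℝ} (hf0 : ∀ x, 0 ≤ f x) (hfB : ∀ x, f x ≤ B)
    (hφ : ∀ x, R ≤ dist x x₀ → t ≤ φ x) :
    ∫⁻ x, ENNReal.ofReal (f x) ∂μ
      ≤ ENNReal.ofReal B * μ (ball x₀ R)
        + ENNReal.ofReal (exp (-t)) * ∫⁻ x, ENNReal.ofReal (f x * exp (φ x)) ∂μ := by
  rw [← lintegral_add_compl _ measurableSet_ball]
  gcongr
  · calc ∫⁻ x in ball x₀ R, ENNReal.ofReal (f x) ∂μ
        ≤ ∫⁻ _ in ball x₀ R, ENNReal.ofReal B ∂μ :=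
          setLIntegral_mono' measurableSet_ball fun x _ => ENNReal.ofReal_le_ofReal (hfB x)
      _ = ENNReal.ofReal B * μ (ball x₀ R) := setLIntegral_const _ _
  · exact setLIntegral_ofReal_le_exp_neg_mul_lintegral μ measurableSet_ball.compl hf0
      fun x hx => hφ x (not_lt.1 hx)

lemma rpow_le_sqrt_one_add_norm_sq_rpow {E : Type*} [SeminormedAddCommGroup E] {p R : ℝ}
    (hp : 0 ≤ p) (hR : 0 ≤ R) {v : E} (hv : R ≤ ‖v‖) : R ^ p ≤ √(1 + ‖v‖ ^ 2) ^ p := by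
  refine rpow_le_rpow hR ?_ hp
  calc R ≤ ‖v‖ := hv
    _ = √(‖v‖ ^ 2) := (sqrt_sq (norm_nonneg v)).symm
    _ ≤ √(1 + ‖v‖ ^ 2) := sqrt_le_sqrt (by linarith)

theorem lintegral_ofReal_le_ball_add_exp_moment_addHaar {E : Type*} [NormedAddCommGroup E]
    [NormedSpace ℝ E] [FiniteDimensional ℝ E] [Nontrivial E] [MeasurableSpace E] [BorelSpace E]
    (μ : Measure E) [μ.IsAddHaarMeasure] {f : E → ℝ} {B c p R : ℝ}
    (hf0 : ∀ v, 0 ≤ f v) (hfB : ∀ v, f v ≤ B) (hc : 0 ≤ c) (hp : 0 ≤ p) (hR : 0 ≤ R) :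
    ∫⁻ v, ENNReal.ofReal (f v) ∂μ
      ≤ ENNReal.ofReal B * (ENNReal.ofReal (R ^ Module.finrank ℝ E) * μ (ball 0 1))
        + ENNReal.ofReal (exp (-(c * R ^ p)))
          * ∫⁻ v, ENNReal.ofReal (f v * exp (c * √(1 + ‖v‖ ^ 2) ^ p)) ∂μ := by
  rw [← Measure.addHaar_ball μ 0 hR]
  refine lintegral_ofReal_le_ball_add_exp_moment μ 0 hf0 hfB fun v hv => ?_
  rw [dist_zero_right] at hv
  exact mul_le_mul_of_nonneg_left (rpow_le_sqrt_one_add_norm_sq_rpow hp hR hv) hc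

lemma exp_neg_log_max_one_mul_le_one (M : ℝ) : exp (-log (max M 1)) * M ≤ 1 := by
  have hpos : 0 < max M 1 := lt_max_of_lt_right one_pos
  rw [exp_neg, exp_log hpos, inv_mul_le_iff₀ hpos, mul_one]
  exact le_max_left M 1

theorem stmt10 (d : ℕ) (hd : 1 ≤ d) (α c B : ℝ) (hα : 1 ≤ α) (hc : 0 < c) (hB : 0 < B) :
    ∃ C : ℝ, 0 < C ∧
      ∀ f : EuclideanSpace ℝ (Fin d) → ℝ,
        Measurable f → (∀ v, 0 ≤ f v) → (∀ v, f v ≤ B) →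
        Integrable (fun v => f v * Real.exp (c * Real.sqrt (1 + ‖v‖ ^ 2) ^ ((d : ℝ) * α))) →
        ∫⁻ v, ENNReal.ofReal (f v)
          ≤ ENNReal.ofReal (1 + C *
              Real.log (max (∫ v, f v *
                Real.exp (c * Real.sqrt (1 + ‖v‖ ^ 2) ^ ((d : ℝ) * α))) 1) ^ (1 / α)) := by
  have hdα : 0 < (d : ℝ) * α := mul_pos (by exact_mod_cast hd) (by linarith)
  have : Nonempty (Fin d) := ⟨⟨0, hd⟩⟩
  set κ := (volume (ball (0 : EuclideanSpace ℝ (Fin d)) 1)).toReal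
  have hκ : 0 < κ := ENNReal.toReal_pos (measure_ball_pos _ _ one_pos).ne' measure_ball_lt_top.ne
  refine ⟨B * κ / c ^ (1 / α), by positivity, fun f _ hf0 hfB hInt => ?_⟩
  set M := ∫ v, f v * exp (c * √(1 + ‖v‖ ^ 2) ^ ((d : ℝ) * α))
  set L := log (max M 1)
  have hL : 0 ≤ L := log_nonneg (le_max_right _ _)
  set R := (L / c) ^ ((d * α)⁻¹)
  have hR : 0 ≤ R := rpow_nonneg (div_nonneg hL hc.le) _
  have hcR : c * R ^ ((d : ℝ) * α) = L := by
    rw [rpow_inv_rpow (by positivity) hdα.ne', mul_div_cancel₀ _ hc.ne']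
  have hRd : R ^ d = L ^ (1 / α) / c ^ (1 / α) := by
    rw [← rpow_natCast, ← rpow_mul (by positivity), ← div_rpow hL hc.le]
    congr 1
    field_simp
  have hM : ∫⁻ v, ENNReal.ofReal (f v * exp (c * √(1 + ‖v‖ ^ 2) ^ ((d : ℝ) * α))) =
      ENNReal.ofReal M :=
    (ofReal_integral_eq_lintegral_ofReal hInt
      (ae_of_all _ fun v => mul_nonneg (hf0 v) (exp_pos _).le)).symm
  have hball : volume (ball (0 : EuclideanSpace ℝ (Fin d)) 1) = ENNReal.ofReal κ :=
    (ENNReal.ofReal_toReal measure_ball_lt_top.ne).symm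
  calc ∫⁻ v, ENNReal.ofReal (f v)
      ≤ ENNReal.ofReal B * (ENNReal.ofReal (R ^ d) * ENNReal.ofReal κ)
        + ENNReal.ofReal (exp (-L)) * ENNReal.ofReal M := by
        simpa only [finrank_euclideanSpace_fin, hcR, hM, hball] using
          lintegral_ofReal_le_ball_add_exp_moment_addHaar volume hf0 hfB hc.le hdα.le hR
    _ = ENNReal.ofReal (B * κ / c ^ (1 / α) * L ^ (1 / α)) + ENNReal.ofReal (exp (-L) * M) := by
        rw [← ENNReal.ofReal_mul (pow_nonneg hR d), ← ENNReal.ofReal_mul hB.le,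
          ← ENNReal.ofReal_mul (exp_pos _).le, hRd]
        ring_nf
    _ ≤ ENNReal.ofReal (B * κ / c ^ (1 / α) * L ^ (1 / α)) + ENNReal.ofReal 1 := by
        gcongr
        exact exp_neg_log_max_one_mul_le_one M
    _ = ENNReal.ofReal (1 + B * κ / c ^ (1 / α) * L ^ (1 / α)) := by
        rw [← ENNReal.ofReal_add (by positivity) zero_le_one, add_comm]
end
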